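/- Fix 0 < ρ_L ≤ ρ_U and c > 0, and define g₁(μ) = erf((ρ_U + μ)/c) − erf((ρ_L + μ)/c). Then for all μ with −ρ_U ≤ μ ≤ ρ_U, g₁(μ) ≥ g₁(ρ_U) = erf(2ρ_U/c) − erf((ρ_L + ρ_U)/c). -/

import Mathlib

/-!
Writing `L = (ρU - ρL)/c`, `g₁(μ)` is `2/√π` times the Gaussian mass of the window
`[a, a + L]` with `a = (ρL + μ)/c`. For an even integrand that decreases away from `0`, the mass of
a window of fixed length only decreases as its midpoint moves away from `0`: sliding a window with
midpoint `≥ 0` right by `b - a` trades `[a, b]` for `[a + L, b + L]`, whose points are farther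
from `0`, and reflection about `0` handles midpoints `< 0`. For
`-ρU ≤ μ ≤ ρU` the midpoint of the window is at most as far from `0` as it is for `μ = ρU`.
-/

noncomputable def erf (x : ℝ) : ℝ :=
  (2 / Real.sqrt Real.pi) * ∫ t in (0 : ℝ)..x, Real.exp (-t ^ 2)

noncomputable def g1 (ρL ρU c μ : ℝ) : ℝ := erf ((ρU + μ) / c) - erf ((ρL + μ) / c)

open Set intervalIntegral

section EvenAntitone

variable {f : ℝ → ℝ}

lemma apply_le_apply_of_abs_le (heven : ∀ x, f (-x) = f x) (hanti : AntitoneOn f (Ici 0))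
    {x y : ℝ} (h : |x| ≤ |y|) : f y ≤ f x := by
  have habs : ∀ z, f |z| = f z := fun z => by
    rcases abs_choice z with hz | hz <;> rw [hz]
    exact heven z
  rw [← habs x, ← habs y]
  exact hanti (abs_nonneg x) (abs_nonneg y) h

lemma integral_window_le_of_le (hf : Continuous f) (heven : ∀ x, f (-x) = f x)
    (hanti : AntitoneOn f (Ici 0)) {L a b : ℝ} (hL : 0 ≤ L) (hab : a ≤ b) (ha : -(L / 2) ≤ a) :
    ∫ t in b..b + L, f t ≤ ∫ t in a..a + L, f t := by
  have hint : ∀ u v, IntervalIntegrable f MeasureTheory.volume u v := hf.intervalIntegrable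
  have hshift : ∫ t in a..b, f (t + L) = ∫ t in a + L..b + L, f t :=
    integral_comp_add_right f L
  have hdiff : (∫ t in a..a + L, f t) - ∫ t in b..b + L, f t = ∫ t in a..b, (f t - f (t + L)) := by
    have hint_shift : IntervalIntegrable (fun t => f (t + L)) MeasureTheory.volume a b :=
      (by fun_prop : Continuous fun t => f (t + L)).intervalIntegrable a b
    rw [integral_sub (hint a b) hint_shift, hshift]
    linarith [integral_add_adjacent_intervals (hint a (a + L)) (hint (a + L) (b + L)),
      integral_add_adjacent_intervals (hint a b) (hint b (b + L))]
  have hnonneg : 0 ≤ ∫ t in a..b, (f t - f (t + L)) := by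
    refine integral_nonneg hab fun t ht => sub_nonneg.2 ?_
    apply apply_le_apply_of_abs_le heven hanti
    rw [abs_of_nonneg (by linarith [ht.1] : 0 ≤ t + L)]
    exact abs_le.2 ⟨by linarith [ht.1], by linarith⟩
  linarith

lemma integral_window_eq_reflect (heven : ∀ x, f (-x) = f x) (L a : ℝ) :
    ∫ t in a..a + L, f t = ∫ t in -L - a..(-L - a) + L, f t := by
  rw [show -L - a = -(a + L) by ring, show -(a + L) + L = -a by ring, ← integral_comp_neg]
  simp only [heven]

lemma integral_window_le_of_abs_le (hf : Continuous f) (heven : ∀ x, f (-x) = f x)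
    (hanti : AntitoneOn f (Ici 0)) {L a b : ℝ} (hL : 0 ≤ L) (h : |a + L / 2| ≤ |b + L / 2|) :
    ∫ t in b..b + L, f t ≤ ∫ t in a..a + L, f t := by
  have hreflect : ∀ x, ∫ t in x..x + L, f t
      = ∫ t in |x + L / 2| - L / 2..|x + L / 2| - L / 2 + L, f t := fun x => by
    rcases abs_cases (x + L / 2) with ⟨hx, -⟩ | ⟨hx, -⟩ <;> rw [hx]
    · ring_nf
    · rw [integral_window_eq_reflect heven L x]
      ring_nf
  rw [hreflect a, hreflect b]
  exact integral_window_le_of_le hf heven hanti hL (by linarith)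
    (by linarith [abs_nonneg (a + L / 2)])

end EvenAntitone

lemma continuous_exp_neg_sq : Continuous fun t : ℝ => Real.exp (-t ^ 2) := by fun_prop

lemma exp_neg_sq_neg (x : ℝ) : Real.exp (-(-x) ^ 2) = Real.exp (-x ^ 2) := by rw [neg_sq]

lemma antitoneOn_exp_neg_sq : AntitoneOn (fun t : ℝ => Real.exp (-t ^ 2)) (Ici 0) :=
  fun _ hx _ _ hxy => Real.exp_le_exp.2 (neg_le_neg (pow_le_pow_left₀ hx hxy 2))

lemma erf_sub_erf (x y : ℝ) :
    erf x - erf y = (2 / Real.sqrt Real.pi) * ∫ t in y..x, Real.exp (-t ^ 2) := by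
  rw [erf, erf, ← mul_sub, integral_interval_sub_left]
  · exact continuous_exp_neg_sq.intervalIntegrable _ _
  · exact continuous_exp_neg_sq.intervalIntegrable _ _

lemma g1_eq_integral_window (ρL ρU c μ : ℝ) :
    g1 ρL ρU c μ = (2 / Real.sqrt Real.pi) *
      ∫ t in (ρL + μ) / c..(ρL + μ) / c + (ρU - ρL) / c, Real.exp (-t ^ 2) := by
  rw [g1, ← erf_sub_erf]
  ring_nf

theorem stmt7 (ρL ρU c : ℝ) (hL : 0 < ρL) (hLU : ρL ≤ ρU) (hc : 0 < c) :
    (∀ μ : ℝ, -ρU ≤ μ → μ ≤ ρU → g1 ρL ρU c ρU ≤ g1 ρL ρU c μ) ∧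
    g1 ρL ρU c ρU = erf (2 * ρU / c) - erf ((ρL + ρU) / c) := by
  refine ⟨fun μ hμl hμu => ?_, by rw [g1, two_mul]⟩
  have hmid : ∀ x, (ρL + x) / c + (ρU - ρL) / c / 2 = ((ρL + ρU) / 2 + x) / c := fun x => by ring
  have hcloser : |(ρL + μ) / c + (ρU - ρL) / c / 2| ≤ |(ρL + ρU) / c + (ρU - ρL) / c / 2| := by
    rw [hmid, hmid]
    refine abs_le_abs (by gcongr) ?_
    rw [← neg_div]
    gcongr
    linarith
  rw [g1_eq_integral_window, g1_eq_integral_window]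
  gcongr
  exact integral_window_le_of_abs_le continuous_exp_neg_sq exp_neg_sq_neg antitoneOn_exp_neg_sq
    (div_nonneg (sub_nonneg.2 hLU) hc.le) hcloser
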